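/- If the rows of a square real matrix B sum to the zero vector and the columns of B also sum to the zero vector, then the matrix B̃ obtained by deleting the first row and first column of B satisfies rank(B̃) = rank(B). -/

import Mathlib

open Submodule

namespace Matrix

variable {R : Type*} {m : Type*} {n : ℕ}

theorem rank_submatrix_id_succ_of_sum_cols_eq_zero [CommRing R]
    (A : Matrix m (Fin (n + 1)) R) (h : ∀ i, ∑ j, A i j = 0) :
    (A.submatrix id Fin.succ).rank = A.rank := by
  have hcol : A.col 0 = -∑ k : Fin n, A.col k.succ := by
    ext i
    simpa [Fin.sum_univ_succ, eq_neg_iff_add_eq_zero] using h i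
  have hmem : A.col 0 ∈ span R (Set.range (Fin.tail A.col)) := by
    rw [hcol]
    exact neg_mem (sum_mem fun k _ => subset_span ⟨k, rfl⟩)
  rw [rank_eq_finrank_span_cols, rank_eq_finrank_span_cols, Fin.range_fin_succ A.col,
    span_insert_eq_span hmem]
  rfl

theorem rank_submatrix_succ_id_of_sum_rows_eq_zero [Field R] [Fintype m]
    (A : Matrix (Fin (n + 1)) m R) (h : ∀ j, ∑ i, A i j = 0) :
    (A.submatrix Fin.succ id).rank = A.rank := by
  rw [← rank_transpose, ← rank_transpose A, transpose_submatrix]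
  exact rank_submatrix_id_succ_of_sum_cols_eq_zero Aᵀ h

end Matrix

/-- If the rows of a square real matrix sum to zero and the columns sum to
zero, then deleting the first row and first column does not change the rank. -/
theorem rank_delete_first_row_col (n : ℕ) (B : Matrix (Fin (n + 1)) (Fin (n + 1)) ℝ)
    (hrows : ∀ j, ∑ i, B i j = 0) (hcols : ∀ i, ∑ j, B i j = 0) :
    (B.submatrix Fin.succ Fin.succ).rank = B.rank := by
  calc (B.submatrix Fin.succ Fin.succ).rank
      = ((B.submatrix Fin.succ id).submatrix id Fin.succ).rank := rfl
    _ = (B.submatrix Fin.succ id).rank :=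
        Matrix.rank_submatrix_id_succ_of_sum_cols_eq_zero _ fun i => hcols i.succ
    _ = B.rank := Matrix.rank_submatrix_succ_id_of_sum_rows_eq_zero B hrows
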